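/- arXiv:1709.07789 — 3 statements merged into one kernel-verified Lean document; each statement's English description precedes it below -/
import Mathlib

section
/- Let Φ: M → G solve the linear system ∂_αΦ = U_αΦ with ω = U_α dx^α, and let Υ be a g-valued one-form on M. Then there exists locally a g-valued function F with 𝐝F = Ad_{Φ⁻¹}Υ (i.e., ∂_αF = Φ⁻¹A_αΦ where Υ = A_α dx^α) if and only if 𝐝_{2ω}Υ := 𝐝Υ − [ω∧Υ] = 0. -/
/-- The partial derivative `∂_α` (entrywise) of a matrix-valued function on `ℝ^m`. -/
noncomputable def pdM {m N : ℕ} (α : Fin m)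
    (f : (Fin m → ℝ) → Matrix (Fin N) (Fin N) ℂ) :
    (Fin m → ℝ) → Matrix (Fin N) (Fin N) ℂ :=
  fun x i j => fderiv ℝ (fun y => f y i j) x (Pi.single α 1)

/-- Smoothness (entrywise) of a matrix-valued function on `ℝ^m`. -/
def SmoothMat {m N : ℕ} (f : (Fin m → ℝ) → Matrix (Fin N) (Fin N) ℂ) : Prop :=
  ∀ i j, ContDiff ℝ (⊤ : ℕ∞) fun y => f y i j

set_option maxHeartbeats 1000000


open scoped Topology
open Metric ContinuousLinearMap

noncomputable section
namespace S6

variable {m : ℕ}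

/-- The derivative (in `x`) of the integrand `x ↦ ∑ α, x α • g α (t • x)`. -/
noncomputable def Fd (g : Fin m → (Fin m → ℝ) → ℂ) (x : Fin m → ℝ) (t : ℝ) :
    (Fin m → ℝ) →L[ℝ] ℂ :=
  ∑ α, (x α • (t • fderiv ℝ (g α) (t • x))
    + (ContinuousLinearMap.proj α : (Fin m → ℝ) →L[ℝ] ℝ).smulRight (g α (t • x)))

lemma hasFDerivAt_integrand (g : Fin m → (Fin m → ℝ) → ℂ)
    (hg : ∀ α, ContDiff ℝ (⊤ : ℕ∞) (g α)) (t : ℝ) (x : Fin m → ℝ) :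
    HasFDerivAt (fun x : Fin m → ℝ => ∑ α, x α • g α (t • x)) (Fd g x t) x := by
  apply HasFDerivAt.fun_sum
  intro α _
  have h1 : HasFDerivAt (fun y : Fin m → ℝ => y α)
      (ContinuousLinearMap.proj α : (Fin m → ℝ) →L[ℝ] ℝ) x :=
    (ContinuousLinearMap.proj α : (Fin m → ℝ) →L[ℝ] ℝ).hasFDerivAt
  have h2 : HasFDerivAt (fun y : Fin m → ℝ => t • y)
      (t • ContinuousLinearMap.id ℝ (Fin m → ℝ)) x := (hasFDerivAt_id x).const_smul t
  have h3 : HasFDerivAt (g α) (fderiv ℝ (g α) (t • x)) (t • x) :=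
    (((hg α).differentiable (by simp)) (t • x)).hasFDerivAt
  have h4 := h3.comp x h2
  rw [ContinuousLinearMap.comp_smul, ContinuousLinearMap.comp_id] at h4
  exact h1.smul h4

lemma contFd (g : Fin m → (Fin m → ℝ) → ℂ) (hg : ∀ α, ContDiff ℝ (⊤ : ℕ∞) (g α)) :
    Continuous fun p : (Fin m → ℝ) × ℝ => Fd g p.1 p.2 := by
  apply continuous_finset_sum
  intro α _
  have hsm : Continuous fun p : (Fin m → ℝ) × ℝ => p.2 • p.1 :=
    continuous_snd.smul continuous_fst
  apply Continuous.add
  · exact ((continuous_apply α).comp continuous_fst).smul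
      (continuous_snd.smul (((hg α).continuous_fderiv (by simp)).comp hsm))
  · exact (ContinuousLinearMap.smulRightL ℝ (Fin m → ℝ) ℂ
      (ContinuousLinearMap.proj α)).continuous.comp ((hg α).continuous.comp hsm)

end S6

namespace S6

lemma contFdt (g : Fin m → (Fin m → ℝ) → ℂ) (hg : ∀ α, ContDiff ℝ (⊤ : ℕ∞) (g α))
    (x : Fin m → ℝ) : Continuous fun t : ℝ => Fd g x t := by
  apply continuous_finset_sum
  intro α _
  have hsm : Continuous fun t : ℝ => t • x := continuous_id.smul continuous_const
  apply Continuous.add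
  · exact continuous_const.fun_smul
      (continuous_id.fun_smul (((hg α).continuous_fderiv (by simp)).comp hsm))
  · exact (ContinuousLinearMap.smulRightL ℝ (Fin m → ℝ) ℂ
      (ContinuousLinearMap.proj α)).continuous.comp ((hg α).continuous.comp hsm)

lemma key (g : Fin m → (Fin m → ℝ) → ℂ) (hg : ∀ α, ContDiff ℝ (⊤ : ℕ∞) (g α)) (x₀ : Fin m → ℝ) :
    HasFDerivAt (fun x : Fin m → ℝ => ∫ t in (0:ℝ)..1, ∑ α, x α • g α (t • x))
      (∫ t in (0:ℝ)..1, Fd g x₀ t) x₀ := by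
  obtain ⟨C, hC⟩ := (((isCompact_closedBall x₀ 1).prod isCompact_uIcc)).exists_bound_of_continuousOn
    (contFd g hg).continuousOn
  have hcontF : ∀ x : Fin m → ℝ, Continuous fun t : ℝ => ∑ α, x α • g α (t • x) := by
    intro x
    exact continuous_finset_sum _ fun α _ =>
      continuous_const.fun_smul ((hg α).continuous.comp (continuous_id.smul continuous_const))
  apply intervalIntegral.hasFDerivAt_integral_of_dominated_of_fderiv_le
      (F' := fun x t => Fd g x t) (bound := fun _ => C) (s := ball x₀ 1) (ball_mem_nhds x₀ one_pos)
  · exact Filter.Eventually.of_forall fun x => (hcontF x).aestronglyMeasurable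
  · exact (hcontF x₀).intervalIntegrable 0 1
  · exact (contFdt g hg x₀).aestronglyMeasurable
  · apply Filter.Eventually.of_forall
    intro t ht x hx
    exact hC (x, t) ⟨ball_subset_closedBall hx, Set.uIoc_subset_uIcc ht⟩
  · exact intervalIntegrable_const
  · exact Filter.Eventually.of_forall fun t _ x _ => hasFDerivAt_integrand g hg t x

end S6

namespace S6

lemma Fd_apply_single (g : Fin m → (Fin m → ℝ) → ℂ) (hg : ∀ α, ContDiff ℝ (⊤ : ℕ∞) (g α))
    (hsym : ∀ α β x, fderiv ℝ (g α) x (Pi.single β 1) = fderiv ℝ (g β) x (Pi.single α 1))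
    (x : Fin m → ℝ) (t : ℝ) (β : Fin m) :
    Fd g x t (Pi.single β 1) = g β (t • x) + t • (fderiv ℝ (g β) (t • x)) x := by
  have hx : ∑ α, Pi.single α (x α) = x := Finset.univ_sum_single x
  have h1 : ∀ α : Fin m, (x α • (t • fderiv ℝ (g α) (t • x))
      + (ContinuousLinearMap.proj α : (Fin m → ℝ) →L[ℝ] ℝ).smulRight (g α (t • x)))
        (Pi.single β 1)
      = t • (x α • fderiv ℝ (g β) (t • x) (Pi.single α 1))
        + ((Pi.single β 1 : Fin m → ℝ) α) • g α (t • x) := by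
    intro α
    simp [hsym α β, smul_comm (x α) t]
  have h2 : ∑ α, x α • (Pi.single α 1 : Fin m → ℝ) = x := by
    conv_rhs => rw [← hx]
    exact Finset.sum_congr rfl fun α _ => by rw [← Pi.single_smul, smul_eq_mul, mul_one]
  have h4 : ∑ γ, x γ • (fderiv ℝ (g β) (t • x)) (Pi.single γ 1)
      = (fderiv ℝ (g β) (t • x)) x := by
    calc ∑ γ, x γ • (fderiv ℝ (g β) (t • x)) (Pi.single γ 1)
        = ∑ γ, (fderiv ℝ (g β) (t • x)) (x γ • (Pi.single γ 1 : Fin m → ℝ)) := by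
          simp only [map_smul]
      _ = (fderiv ℝ (g β) (t • x)) (∑ γ, x γ • (Pi.single γ 1 : Fin m → ℝ)) :=
          (map_sum _ _ _).symm
      _ = (fderiv ℝ (g β) (t • x)) x := by rw [h2]
  have h3 : ∑ α : Fin m, ((Pi.single β 1 : Fin m → ℝ) α) • g α (t • x) = g β (t • x) := by
    rw [Finset.sum_eq_single β (fun b _ hb => by
      rw [Pi.single_eq_of_ne hb, zero_smul]) (by simp)]
    simp
  rw [Fd, ContinuousLinearMap.sum_apply]
  simp only [h1]
  rw [Finset.sum_add_distrib, ← Finset.smul_sum, h4, h3, add_comm]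

lemma integral_Fd_single (g : Fin m → (Fin m → ℝ) → ℂ) (hg : ∀ α, ContDiff ℝ (⊤ : ℕ∞) (g α))
    (hsym : ∀ α β x, fderiv ℝ (g α) x (Pi.single β 1) = fderiv ℝ (g β) x (Pi.single α 1))
    (x : Fin m → ℝ) (β : Fin m) :
    (∫ t in (0:ℝ)..1, Fd g x t) (Pi.single β 1) = g β x := by
  have hcont : Continuous fun t => Fd g x t := contFdt g hg x
  have happ := ContinuousLinearMap.intervalIntegral_apply (𝕜 := ℝ) (E := ℂ) (μ := MeasureTheory.volume)
    (F := Fin m → ℝ) (a := (0:ℝ)) (b := (1:ℝ)) (φ := fun t => Fd g x t)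
    (hcont.intervalIntegrable 0 1) (Pi.single β 1)
  rw [happ]
  have hdg : ∀ t : ℝ, HasDerivAt (fun s : ℝ => g β (s • x)) (fderiv ℝ (g β) (t • x) x) t := by
    intro t
    have hin : HasDerivAt (fun s : ℝ => s • x) x t := by
      simpa using (hasDerivAt_id t).smul_const x
    exact (((hg β).differentiable (by simp) (t • x)).hasFDerivAt).comp_hasDerivAt t hin
  have hder : ∀ t ∈ Set.uIcc (0:ℝ) 1, HasDerivAt (fun s : ℝ => s • g β (s • x))
      (Fd g x t (Pi.single β 1)) t := by
    intro t _
    rw [Fd_apply_single g hg hsym]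
    simpa [add_comm] using (hasDerivAt_id t).fun_smul (hdg t)
  have := intervalIntegral.integral_eq_sub_of_hasDerivAt hder
    ((hcont.clm_apply continuous_const).intervalIntegrable 0 1)
  rw [this]
  simp

lemma clm_ext_single {T : Type*} [NormedAddCommGroup T] [NormedSpace ℝ T]
    {L L' : (Fin m → ℝ) →L[ℝ] T}
    (h : ∀ β, L (Pi.single β 1) = L' (Pi.single β 1)) : L = L' := by
  ext v
  have hv : v = ∑ β, v β • (Pi.single β 1 : Fin m → ℝ) := by
    conv_lhs => rw [← Finset.univ_sum_single v]
    exact Finset.sum_congr rfl fun β _ => by rw [← Pi.single_smul, smul_eq_mul, mul_one]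
  rw [hv, map_sum, map_sum]
  exact Finset.sum_congr rfl fun β _ => by rw [map_smul, map_smul, h β]

/-- Poincaré lemma, scalar version on all of `ℝ^m`. -/
lemma poincare (g : Fin m → (Fin m → ℝ) → ℂ) (hg : ∀ α, ContDiff ℝ (⊤ : ℕ∞) (g α))
    (hsym : ∀ α β x, fderiv ℝ (g α) x (Pi.single β 1) = fderiv ℝ (g β) x (Pi.single α 1)) :
    ∃ f : (Fin m → ℝ) → ℂ, ContDiff ℝ (⊤ : ℕ∞) f ∧
      ∀ x α, fderiv ℝ f x (Pi.single α 1) = g α x := by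
  set L : (Fin m → ℝ) → (Fin m → ℝ) →L[ℝ] ℂ := fun x =>
    ∑ β, (ContinuousLinearMap.proj β : (Fin m → ℝ) →L[ℝ] ℝ).smulRight (g β x) with hLdef
  have hLs : ∀ x β, L x (Pi.single β 1) = g β x := by
    intro x β
    rw [hLdef]
    simp only [ContinuousLinearMap.sum_apply, ContinuousLinearMap.smulRight_apply,
      ContinuousLinearMap.proj_apply]
    rw [Finset.sum_eq_single β (fun b _ hb => by
      rw [Pi.single_eq_of_ne hb, zero_smul]) (by simp)]
    simp
  have hL : ∀ x, HasFDerivAt (fun x : Fin m → ℝ =>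
      ∫ t in (0:ℝ)..1, ∑ α, x α • g α (t • x)) (L x) x := by
    intro x
    have h := key g hg x
    have he : (∫ t in (0:ℝ)..1, Fd g x t) = L x := by
      apply clm_ext_single
      intro β
      rw [integral_Fd_single g hg hsym x β, hLs x β]
    rwa [he] at h
  have hLan : ContDiff ℝ (⊤ : ℕ∞) L := by
    rw [hLdef]
    exact ContDiff.sum fun β _ => (ContinuousLinearMap.smulRightL ℝ (Fin m → ℝ) ℂ
      (ContinuousLinearMap.proj β)).contDiff.comp (hg β)
  refine ⟨fun x => ∫ t in (0:ℝ)..1, ∑ α, x α • g α (t • x), ?_, ?_⟩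
  · refine contDiff_infty_iff_fderiv.2 ⟨fun x => (hL x).differentiableAt, ?_⟩
    rw [show fderiv ℝ _ = L from funext fun x => (hL x).fderiv]
    exact hLan
  · intro x α
    rw [(hL x).fderiv]
    exact hLs x α

end S6


namespace S6

variable {m N : ℕ}

lemma entry_diff {f : (Fin m → ℝ) → Matrix (Fin N) (Fin N) ℂ} (hf : SmoothMat f)
    (i j : Fin N) (x : Fin m → ℝ) : DifferentiableAt ℝ (fun y => f y i j) x :=
  ((hf i j).differentiable (by simp)).differentiableAt

lemma smoothMat_mul {f g : (Fin m → ℝ) → Matrix (Fin N) (Fin N) ℂ}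
    (hf : SmoothMat f) (hg : SmoothMat g) : SmoothMat (fun y => f y * g y) := by
  intro i j
  have h : (fun y => (f y * g y) i j) = fun y => ∑ k, f y i k * g y k j := by
    funext y; exact Matrix.mul_apply
  rw [h]
  exact ContDiff.sum fun k _ => (hf i k).mul (hg k j)

lemma smoothMat_det {f : (Fin m → ℝ) → Matrix (Fin N) (Fin N) ℂ} (hf : SmoothMat f) :
    ContDiff ℝ (⊤ : ℕ∞) fun y => (f y).det := by
  have h : (fun y => (f y).det) = fun y => ∑ σ : Equiv.Perm (Fin N),
      Equiv.Perm.sign σ • ∏ i, f y (σ i) i := by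
    funext y; rw [Matrix.det_apply]
  rw [h]
  refine ContDiff.sum fun σ _ => ?_
  have h2 : (fun y => Equiv.Perm.sign σ • ∏ i, f y (σ i) i)
      = fun y => ((Equiv.Perm.sign σ : ℤ) : ℂ) * ∏ i, f y (σ i) i := by
    funext y; rw [Units.smul_def, zsmul_eq_mul]
  rw [h2]
  exact contDiff_const.mul (contDiff_prod fun i _ => hf (σ i) i)

lemma smoothMat_inv {Φ : (Fin m → ℝ) → Matrix (Fin N) (Fin N) ℂ}
    (hΦ : SmoothMat Φ) (hinv : ∀ x, IsUnit (Φ x)) : SmoothMat fun y => (Φ y)⁻¹ := by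
  intro i j
  have hdet : ∀ y, IsUnit (Φ y).det := fun y => (Matrix.isUnit_iff_isUnit_det _).1 (hinv y)
  have h : (fun y => (Φ y)⁻¹ i j) = fun y => ((Φ y).det)⁻¹ * (Φ y).adjugate i j := by
    funext y
    rw [Matrix.inv_def, Matrix.smul_apply, Ring.inverse_eq_inv', smul_eq_mul]
  rw [h]
  apply ContDiff.mul
  · exact (smoothMat_det hΦ).inv fun y => (hdet y).ne_zero
  · have h2 : (fun y => (Φ y).adjugate i j)
        = fun y => ((Φ y).updateRow j (Pi.single i 1)).det := by
      funext y; rw [Matrix.adjugate_apply]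
    rw [h2]
    apply smoothMat_det (f := fun y => (Φ y).updateRow j (Pi.single i 1))
    intro k l
    by_cases hk : k = j
    · subst hk
      simpa [Matrix.updateRow_apply] using contDiff_const (c := (Pi.single i 1 : Fin N → ℂ) l)
    · simpa [Matrix.updateRow_apply, hk] using hΦ k l

lemma pdM_mul {f g : (Fin m → ℝ) → Matrix (Fin N) (Fin N) ℂ}
    (hf : SmoothMat f) (hg : SmoothMat g) (α : Fin m) (x : Fin m → ℝ) :
    pdM α (fun y => f y * g y) x = pdM α f x * g x + f x * pdM α g x := by
  ext i j
  show fderiv ℝ (fun y => (f y * g y) i j) x (Pi.single α 1) = _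
  have h1 : (fun y => (f y * g y) i j) = fun y => ∑ k, f y i k * g y k j := by
    funext y; exact Matrix.mul_apply
  rw [h1, fderiv_fun_sum (fun k _ => (entry_diff hf i k x).fun_mul (entry_diff hg k j x)),
    ContinuousLinearMap.sum_apply]
  have h2 : ∀ k, fderiv ℝ (fun y => f y i k * g y k j) x (Pi.single α 1)
      = f x i k * pdM α g x k j + pdM α f x i k * g x k j := by
    intro k
    rw [fderiv_fun_mul (entry_diff hf i k x) (entry_diff hg k j x)]
    simp [pdM, smul_eq_mul, mul_comm]
  rw [Finset.sum_congr rfl fun k _ => h2 k, Finset.sum_add_distrib,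
    Matrix.add_apply, Matrix.mul_apply, Matrix.mul_apply, add_comm]

lemma pdM_inv {Φ : (Fin m → ℝ) → Matrix (Fin N) (Fin N) ℂ}
    {U : Fin m → (Fin m → ℝ) → Matrix (Fin N) (Fin N) ℂ}
    (hΦ : SmoothMat Φ) (hinv : ∀ x, IsUnit (Φ x))
    (hLSP : ∀ α x, pdM α Φ x = U α x * Φ x) (α : Fin m) (x : Fin m → ℝ) :
    pdM α (fun y => (Φ y)⁻¹) x = -((Φ x)⁻¹ * U α x) := by
  have hsi := smoothMat_inv hΦ hinv
  have hdet : IsUnit (Φ x).det := (Matrix.isUnit_iff_isUnit_det _).1 (hinv x)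
  have h2 : pdM α (fun y => (Φ y)⁻¹ * Φ y) x = 0 := by
    have h1 : (fun y => (Φ y)⁻¹ * Φ y) = fun _ => (1 : Matrix (Fin N) (Fin N) ℂ) := by
      funext y; exact Matrix.nonsing_inv_mul _ ((Matrix.isUnit_iff_isUnit_det _).1 (hinv y))
    rw [h1]
    ext i j
    show fderiv ℝ (fun _ => (1 : Matrix (Fin N) (Fin N) ℂ) i j) x (Pi.single α 1) = _
    rw [fderiv_fun_const]
    simp
  rw [pdM_mul hsi hΦ α x, hLSP α x] at h2
  have h3 := congrArg (fun M => M * (Φ x)⁻¹) h2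
  simp only [add_mul, Matrix.mul_assoc, Matrix.mul_nonsing_inv _ hdet, Matrix.mul_one,
    Matrix.zero_mul] at h3
  exact eq_neg_of_add_eq_zero_left h3

lemma conj_eq_iff {Φ : (Fin m → ℝ) → Matrix (Fin N) (Fin N) ℂ}
    (hinv : ∀ x, IsUnit (Φ x)) (x : Fin m → ℝ) (X Y : Matrix (Fin N) (Fin N) ℂ) :
    (Φ x)⁻¹ * X * Φ x = (Φ x)⁻¹ * Y * Φ x ↔ X = Y := by
  have hdet : IsUnit (Φ x).det := (Matrix.isUnit_iff_isUnit_det _).1 (hinv x)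
  constructor
  · intro h
    have h2 := congrArg (fun M => Φ x * M * (Φ x)⁻¹) h
    simpa [Matrix.mul_assoc, Matrix.mul_nonsing_inv_cancel_left _ _ hdet,
      Matrix.nonsing_inv_mul_cancel_left _ _ hdet, Matrix.mul_nonsing_inv _ hdet,
      Matrix.nonsing_inv_mul _ hdet, Matrix.mul_one, Matrix.one_mul] using h2
  · rintro rfl; rfl

lemma pdM_conj {Φ : (Fin m → ℝ) → Matrix (Fin N) (Fin N) ℂ}
    {U : Fin m → (Fin m → ℝ) → Matrix (Fin N) (Fin N) ℂ}
    {A : (Fin m → ℝ) → Matrix (Fin N) (Fin N) ℂ}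
    (hΦ : SmoothMat Φ) (hinv : ∀ x, IsUnit (Φ x))
    (hLSP : ∀ α x, pdM α Φ x = U α x * Φ x) (hA : SmoothMat A)
    (β : Fin m) (x : Fin m → ℝ) :
    pdM β (fun y => (Φ y)⁻¹ * A y * Φ y) x
      = (Φ x)⁻¹ * (pdM β A x - (U β x * A x - A x * U β x)) * Φ x := by
  have hsi := smoothMat_inv hΦ hinv
  have e1 : pdM β (fun y => (Φ y)⁻¹ * A y * Φ y) x
      = pdM β (fun y => (Φ y)⁻¹ * A y) x * Φ x + ((Φ x)⁻¹ * A x) * pdM β Φ x :=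
    pdM_mul (f := fun y => (Φ y)⁻¹ * A y) (smoothMat_mul hsi hA) hΦ β x
  have e2 : pdM β (fun y => (Φ y)⁻¹ * A y) x
      = pdM β (fun y => (Φ y)⁻¹) x * A x + (Φ x)⁻¹ * pdM β A x :=
    pdM_mul (f := fun y => (Φ y)⁻¹) hsi hA β x
  rw [e1, e2, pdM_inv hΦ hinv hLSP β x, hLSP β x]
  noncomm_ring

end S6
namespace S6

variable {m N : ℕ}

lemma pdM_symm_of_exists {B : Fin m → (Fin m → ℝ) → Matrix (Fin N) (Fin N) ℂ}
    (hB : ∀ γ, SmoothMat (B γ)) {V : Set (Fin m → ℝ)} (hV : IsOpen V) {p : Fin m → ℝ}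
    (hp : p ∈ V) {F : (Fin m → ℝ) → Matrix (Fin N) (Fin N) ℂ}
    (hF : ∀ i j, ContDiffOn ℝ (⊤ : ℕ∞) (fun y => F y i j) V)
    (hdF : ∀ x ∈ V, ∀ γ, pdM γ F x = B γ x) (α β : Fin m) :
    pdM β (B α) p = pdM α (B β) p := by
  ext i j
  set f := fun y => F y i j with hfdef
  have hfp : ContDiffAt ℝ (⊤ : ℕ∞) f p := (hF i j).contDiffAt (hV.mem_nhds hp)
  have hev : ∀ᶠ y in 𝓝 p, HasFDerivAt f (fderiv ℝ f y) y := by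
    filter_upwards [hV.mem_nhds hp] with y hy
    exact (((hF i j).contDiffAt (hV.mem_nhds hy)).differentiableAt (by simp)).hasFDerivAt
  have hd1 : ContDiffAt ℝ (⊤ : ℕ∞) (fderiv ℝ f) p := hfp.fderiv_right (by simp)
  have hf'' : HasFDerivAt (fderiv ℝ f) (fderiv ℝ (fderiv ℝ f) p) p :=
    (hd1.differentiableAt (by simp)).hasFDerivAt
  have hsym2 := second_derivative_symmetric_of_eventually hev hf''
      (Pi.single β 1) (Pi.single α 1)
  have hb : ∀ γ δ : Fin m, pdM δ (B γ) p i j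
      = fderiv ℝ (fderiv ℝ f) p (Pi.single δ 1) (Pi.single γ 1) := by
    intro γ δ
    have hBeq : (fun y => B γ y i j) =ᶠ[𝓝 p] fun y => fderiv ℝ f y (Pi.single γ 1) := by
      filter_upwards [hV.mem_nhds hp] with y hy
      rw [← hdF y hy γ]
      rfl
    show fderiv ℝ (fun y => B γ y i j) p (Pi.single δ 1) = _
    rw [hBeq.fderiv_eq]
    have hcomp := ((ContinuousLinearMap.apply ℝ ℂ
      (Pi.single γ 1 : Fin m → ℝ)).hasFDerivAt.comp p hf'')
    have he : fderiv ℝ (fun y => fderiv ℝ f y (Pi.single γ 1)) p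
        = (ContinuousLinearMap.apply ℝ ℂ (Pi.single γ 1 : Fin m → ℝ)).comp
          (fderiv ℝ (fderiv ℝ f) p) := hcomp.fderiv
    rw [he]
    simp
  rw [hb α β, hb β α, hsym2]

theorem local_immersion_iff_dTwo_closed'
    (Φ : (Fin m → ℝ) → Matrix (Fin N) (Fin N) ℂ)
    (U A : Fin m → (Fin m → ℝ) → Matrix (Fin N) (Fin N) ℂ)
    (hΦ : SmoothMat Φ) (hU : ∀ α, SmoothMat (U α)) (hA : ∀ α, SmoothMat (A α))
    (hinv : ∀ x, IsUnit (Φ x))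
    (hLSP : ∀ α x, pdM α Φ x = U α x * Φ x) :
    (∀ p : Fin m → ℝ, ∃ V : Set (Fin m → ℝ), IsOpen V ∧ p ∈ V ∧
      ∃ F : (Fin m → ℝ) → Matrix (Fin N) (Fin N) ℂ,
        (∀ i j, ContDiffOn ℝ (⊤ : ℕ∞) (fun y => F y i j) V) ∧
        ∀ x ∈ V, ∀ α, pdM α F x = (Φ x)⁻¹ * A α x * Φ x)
    ↔ (∀ α β x, pdM β (A α) x - pdM α (A β) x
        = ⁅U β x, A α x⁆ - ⁅U α x, A β x⁆) := by
  set B : Fin m → (Fin m → ℝ) → Matrix (Fin N) (Fin N) ℂ :=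
    fun γ y => (Φ y)⁻¹ * A γ y * Φ y with hBdef
  have hBsm : ∀ γ, SmoothMat (B γ) :=
    fun γ => smoothMat_mul (smoothMat_mul (smoothMat_inv hΦ hinv) (hA γ)) hΦ
  have hBconj : ∀ γ δ x, pdM δ (B γ) x
      = (Φ x)⁻¹ * (pdM δ (A γ) x - (U δ x * A γ x - A γ x * U δ x)) * Φ x :=
    fun γ δ x => pdM_conj hΦ hinv hLSP (hA γ) δ x
  have hiff : ∀ α β x, (pdM β (B α) x = pdM α (B β) x ↔
      pdM β (A α) x - pdM α (A β) x = ⁅U β x, A α x⁆ - ⁅U α x, A β x⁆) := by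
    intro α β x
    rw [hBconj α β x, hBconj β α x, conj_eq_iff hinv x, Ring.lie_def, Ring.lie_def]
    exact sub_eq_sub_iff_sub_eq_sub
  constructor
  · intro hloc α β x
    obtain ⟨V, hV, hxV, F, hF, hdF⟩ := hloc x
    exact (hiff α β x).1
      (pdM_symm_of_exists hBsm hV hxV hF (fun y hy γ => hdF y hy γ) α β)
  · intro hc p
    refine ⟨Set.univ, isOpen_univ, Set.mem_univ p, ?_⟩
    have hsym : ∀ (i j : Fin N) α β x, fderiv ℝ (fun y => B α y i j) x (Pi.single β 1)
        = fderiv ℝ (fun y => B β y i j) x (Pi.single α 1) := by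
      intro i j α β x
      have h := (hiff α β x).2 (hc α β x)
      calc fderiv ℝ (fun y => B α y i j) x (Pi.single β 1) = pdM β (B α) x i j := rfl
        _ = pdM α (B β) x i j := by rw [h]
        _ = _ := rfl
    have hex : ∀ i j : Fin N, ∃ f : (Fin m → ℝ) → ℂ, ContDiff ℝ (⊤ : ℕ∞) f ∧
        ∀ x γ, fderiv ℝ f x (Pi.single γ 1) = B γ x i j :=
      fun i j => poincare (fun γ x => B γ x i j) (fun γ => hBsm γ i j)
        (fun γ δ x => hsym i j γ δ x)
    choose f hf1 hf2 using hex
    refine ⟨fun x i j => f i j x, fun i j => (hf1 i j).contDiffOn, ?_⟩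
    intro x _ γ
    ext i j
    show fderiv ℝ (fun y => f i j y) x (Pi.single γ 1) = B γ x i j
    exact hf2 i j x γ

end S6


/-- if `Φ` solves `∂_αΦ = U_αΦ` and `Υ = A_α dx^α` is a `g`-valued
one-form, then there exists locally a `g`-valued function `F` with
`𝐝F = Ad_{Φ⁻¹}Υ` (i.e. `∂_αF = Φ⁻¹A_αΦ`) if and only if
`𝐝_{2ω}Υ = 𝐝Υ − [ω∧Υ] = 0`. -/
theorem local_immersion_iff_dTwo_closed {m N : ℕ}
    (Φ : (Fin m → ℝ) → Matrix (Fin N) (Fin N) ℂ)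
    (U A : Fin m → (Fin m → ℝ) → Matrix (Fin N) (Fin N) ℂ)
    (hΦ : SmoothMat Φ) (hU : ∀ α, SmoothMat (U α)) (hA : ∀ α, SmoothMat (A α))
    (hinv : ∀ x, IsUnit (Φ x))
    (hLSP : ∀ α x, pdM α Φ x = U α x * Φ x) :
    (∀ p : Fin m → ℝ, ∃ V : Set (Fin m → ℝ), IsOpen V ∧ p ∈ V ∧
      ∃ F : (Fin m → ℝ) → Matrix (Fin N) (Fin N) ℂ,
        (∀ i j, ContDiffOn ℝ (⊤ : ℕ∞) (fun y => F y i j) V) ∧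
        ∀ x ∈ V, ∀ α, pdM α F x = (Φ x)⁻¹ * A α x * Φ x)
    ↔ (∀ α β x, pdM β (A α) x - pdM α (A β) x
        = ⁅U β x, A α x⁆ - ⁅U α x, A β x⁆) := by
  exact S6.local_immersion_iff_dTwo_closed' Φ U A hΦ hU hA hinv hLSP
end
end

section
/- Let Φ: M → G satisfy ∂_αΦ = U_αΦ, and let X be a derivation (a vector field on a parameter space of solutions) commuting with each ∂_α and acting on Φ and U_α. Then F^{FG} := Φ⁻¹(XΦ) satisfies ∂_αF^{FG} = Φ⁻¹(X U_α)Φ for each α, i.e., 𝐝F^{FG} = Ad_{Φ⁻¹}(Xω). -/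
/-- Smoothness of the determinant of a matrix with smooth entries. -/
lemma smoothMat_det {m N : ℕ} {A : (Fin m → ℝ) → Matrix (Fin N) (Fin N) ℂ}
    (hA : ∀ i j, ContDiff ℝ (⊤ : ℕ∞) fun y => A y i j) :
    ContDiff ℝ (⊤ : ℕ∞) fun y => (A y).det := by
  have h1 : (fun y => (A y).det)
      = fun y => ∑ σ : Equiv.Perm (Fin N),
          ((Equiv.Perm.sign σ : ℤ) : ℂ) * ∏ i, A y (σ i) i := by
    funext y; rw [Matrix.det_apply']
  rw [h1]
  exact ContDiff.sum fun σ _ =>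
    contDiff_const.mul (contDiff_prod fun i _ => hA (σ i) i)

/-- Smoothness of the inverse of a smooth everywhere-invertible matrix. -/
lemma smoothMat_inv {m N : ℕ} {A : (Fin m → ℝ) → Matrix (Fin N) (Fin N) ℂ}
    (hA : SmoothMat A) (h : ∀ x, IsUnit (A x)) :
    SmoothMat fun y => (A y)⁻¹ := by
  have hdet : ∀ x, (A x).det ≠ 0 := fun x => by
    have := (Matrix.isUnit_iff_isUnit_det (A x)).mp (h x)
    exact isUnit_iff_ne_zero.mp this
  intro i j
  have h1 : (fun y => (A y)⁻¹ i j)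
      = fun y => ((A y).det)⁻¹ * ((A y).adjugate i j) := by
    funext y
    rw [Matrix.inv_def, Matrix.smul_apply, Ring.inverse_eq_inv', smul_eq_mul]
  rw [h1]
  have hadj : ContDiff ℝ (⊤ : ℕ∞) fun y => (A y).adjugate i j := by
    have h2 : (fun y => (A y).adjugate i j)
        = fun y => ((A y).updateRow j (Pi.single i 1)).det := by
      funext y; rw [Matrix.adjugate_apply]
    rw [h2]
    apply smoothMat_det
    intro a b
    by_cases haj : a = j
    · simp only [Matrix.updateRow_apply, haj, if_pos rfl]
      exact contDiff_const
    · simp only [Matrix.updateRow_apply, if_neg haj]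
      exact hA a b
  exact ((smoothMat_det hA).inv hdet).mul hadj

/-- Pointwise Leibniz rule for `pdM`. -/
lemma pdM_mul {m N : ℕ} (α : Fin m)
    {f g : (Fin m → ℝ) → Matrix (Fin N) (Fin N) ℂ} {x : Fin m → ℝ}
    (hf : ∀ i j, DifferentiableAt ℝ (fun y => f y i j) x)
    (hg : ∀ i j, DifferentiableAt ℝ (fun y => g y i j) x) :
    pdM α (fun y => f y * g y) x = pdM α f x * g x + f x * pdM α g x := by
  ext i j
  show fderiv ℝ (fun y => (f y * g y) i j) x (Pi.single α 1) = _
  have h1 : (fun y => (f y * g y) i j) = fun y => ∑ k, f y i k * g y k j := by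
    funext y; rw [Matrix.mul_apply]
  rw [h1, fderiv_fun_sum (A := fun k y => f y i k * g y k j) fun k _ => (hf i k).mul (hg k j),
    ContinuousLinearMap.sum_apply]
  have h2 : ∀ k : Fin N,
      (fderiv ℝ (fun y => f y i k * g y k j) x) (Pi.single α 1)
      = pdM α f x i k * g x k j + f x i k * pdM α g x k j := by
    intro k
    rw [fderiv_fun_mul (hf i k) (hg k j)]
    simp only [ContinuousLinearMap.add_apply, ContinuousLinearMap.smul_apply,
      smul_eq_mul, pdM]
    ring
  rw [Finset.sum_congr rfl fun k _ => h2 k, Finset.sum_add_distrib]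
  simp [Matrix.add_apply, Matrix.mul_apply]

/-- The derivative of a constant matrix function vanishes. -/
lemma pdM_const {m N : ℕ} (α : Fin m) (C : Matrix (Fin N) (Fin N) ℂ) :
    pdM α (fun _ => C) = fun _ => 0 := by
  funext x
  ext i j
  show fderiv ℝ (fun _ => C i j) x (Pi.single α 1) = (0 : Matrix (Fin N) (Fin N) ℂ) i j
  simp

/-- Fokas–Gel'fand immersion formula (abstract form).  Let
`X` be a derivation on (smooth) matrix-valued functions, commuting with each
`∂_α`.  If `Φ` solves `∂_αΦ = U_αΦ`, then `F^{FG} := Φ⁻¹(XΦ)` satisfies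
`∂_αF^{FG} = Φ⁻¹(XU_α)Φ`, i.e. `𝐝F^{FG} = Ad_{Φ⁻¹}(Xω)`. -/
theorem fokas_gelfand {m N : ℕ}
    (X : ((Fin m → ℝ) → Matrix (Fin N) (Fin N) ℂ) →
         ((Fin m → ℝ) → Matrix (Fin N) (Fin N) ℂ))
    (Φ : (Fin m → ℝ) → Matrix (Fin N) (Fin N) ℂ)
    (U : Fin m → (Fin m → ℝ) → Matrix (Fin N) (Fin N) ℂ)
    (hXadd : ∀ f g, X (f + g) = X f + X g)
    (hXleib : ∀ f g, X (f * g) = X f * g + f * X g)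
    (hXcomm : ∀ (α : Fin m) f, pdM α (X f) = X (pdM α f))
    (hXsmooth : ∀ f, SmoothMat f → SmoothMat (X f))
    (hΦ : SmoothMat Φ) (hU : ∀ α, SmoothMat (U α))
    (hinv : ∀ x, IsUnit (Φ x))
    (hLSP : ∀ α, pdM α Φ = U α * Φ) :
    ∀ (α : Fin m) (x : Fin m → ℝ),
      pdM α (fun y => (Φ y)⁻¹ * X Φ y) x = (Φ x)⁻¹ * (X (U α) x * Φ x) := by
  intro α x
  have hdet : ∀ y, IsUnit (Φ y).det := fun y =>
    (Matrix.isUnit_iff_isUnit_det (Φ y)).mp (hinv y)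
  have hΦinv : SmoothMat fun y => (Φ y)⁻¹ := smoothMat_inv hΦ hinv
  have hXΦ : SmoothMat (X Φ) := hXsmooth Φ hΦ
  have dΦ : ∀ i j, DifferentiableAt ℝ (fun y => Φ y i j) x := fun i j =>
    ((hΦ i j).differentiable (by simp)).differentiableAt
  have dΦinv : ∀ i j, DifferentiableAt ℝ (fun y => (Φ y)⁻¹ i j) x := fun i j =>
    ((hΦinv i j).differentiable (by simp)).differentiableAt
  have dXΦ : ∀ i j, DifferentiableAt ℝ (fun y => X Φ y i j) x := fun i j =>
    ((hXΦ i j).differentiable (by simp)).differentiableAt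
  -- derivative of Φ⁻¹
  have hΦx : pdM α Φ x = U α x * Φ x := by
    rw [hLSP α]; rfl
  have hinvΦ : pdM α (fun y => (Φ y)⁻¹) x = -((Φ x)⁻¹ * U α x) := by
    have hconst : pdM α (fun y => (Φ y)⁻¹ * Φ y) x = 0 := by
      have h1 : (fun y => (Φ y)⁻¹ * Φ y) = fun _ => (1 : Matrix (Fin N) (Fin N) ℂ) := by
        funext y; exact Matrix.nonsing_inv_mul _ (hdet y)
      rw [h1, pdM_const]
    rw [pdM_mul α dΦinv dΦ, hΦx] at hconst
    have h2 : pdM α (fun y => (Φ y)⁻¹) x * Φ x = -((Φ x)⁻¹ * (U α x * Φ x)) := by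
      linear_combination (norm := noncomm_ring) hconst
    have h3 := congrArg (· * (Φ x)⁻¹) h2
    rw [mul_assoc, Matrix.mul_nonsing_inv _ (hdet x), mul_one] at h3
    rw [h3]
    rw [neg_mul, mul_assoc, mul_assoc, Matrix.mul_nonsing_inv _ (hdet x), mul_one]
  -- derivative of XΦ
  have hXΦx : pdM α (X Φ) x = X (U α) x * Φ x + U α x * X Φ x := by
    rw [hXcomm α Φ, hLSP α, hXleib]
    rfl
  rw [pdM_mul α dΦinv dXΦ, hinvΦ, hXΦx]
  noncomm_ring
end

section
/- Let U_x, U_y: M × Λ → g be defined in terms of a smooth map θ: M → g (M ⊆ ℝ² with coordinates x,y) by U_x := (−2/(1−λ²))([∂_xθ, θ] − iλ[∂_yθ, θ]) and U_y := (−2/(1−λ²))(iλ[∂_xθ, θ] + [∂_yθ, θ]), for λ purely imaginary with λ² ≠ 1, where g is a complex matrix Lie algebra closed under these operations. Then the zero-curvature condition ∂_yU_x − ∂_xU_y + [U_x,U_y] = 0 holds for all such λ if θ satisfies [(∂_x² + ∂_y²)θ, θ] = 0 together with the ℂP¹ constraint (−iθ + Id/2)² = (−iθ + Id/2) (i.e.,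 P := −iθ + Id/2 is a projector). -/
namespace ZCCaux

attribute [local instance] LieRing.ofAssociativeRing

variable {m N : ℕ} {f g : (Fin m → ℝ) → Matrix (Fin N) (Fin N) ℂ} {α β : Fin m}

lemma smEntry (hf : SmoothMat f) (i j : Fin N) (x : Fin m → ℝ) :
    DifferentiableAt ℝ (fun y => f y i j) x :=
  ((hf i j).differentiable (by simp)).differentiableAt

lemma smPd (hf : SmoothMat f) (α : Fin m) : SmoothMat (pdM α f) := by
  intro i j
  exact (ContinuousLinearMap.apply ℝ ℂ (Pi.single α (1:ℝ))).contDiff.comp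
    ((hf i j).fderiv_right (m := (⊤ : ℕ∞)) (by simp))

lemma smAdd (hf : SmoothMat f) (hg : SmoothMat g) :
    SmoothMat (fun y => f y + g y) := fun i j => by
  simpa [Matrix.add_apply] using (hf i j).add (hg i j)

lemma smSub (hf : SmoothMat f) (hg : SmoothMat g) :
    SmoothMat (fun y => f y - g y) := fun i j => by
  simpa [Matrix.sub_apply] using (hf i j).sub (hg i j)

lemma smCsmul (c : ℂ) (hf : SmoothMat f) :
    SmoothMat (fun y => c • f y) := fun i j => by
  simpa [Matrix.smul_apply, smul_eq_mul] using (hf i j).const_smul c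

lemma smMul (hf : SmoothMat f) (hg : SmoothMat g) :
    SmoothMat (fun y => f y * g y) := fun i j => by
  simp only [Matrix.mul_apply]
  exact ContDiff.sum fun k _ => (hf i k).mul (hg k j)

lemma smLie (hf : SmoothMat f) (hg : SmoothMat g) :
    SmoothMat (fun y => ⁅f y, g y⁆) := by
  have := smSub (smMul hf hg) (smMul hg hf)
  simpa [Ring.lie_def] using this

lemma pdM_add (hf : SmoothMat f) (hg : SmoothMat g) (x : Fin m → ℝ) :
    pdM α (fun y => f y + g y) x = pdM α f x + pdM α g x := by
  ext i j
  simp only [pdM, Matrix.add_apply]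
  rw [fderiv_fun_add (smEntry hf i j x) (smEntry hg i j x)]
  simp

lemma pdM_sub (hf : SmoothMat f) (hg : SmoothMat g) (x : Fin m → ℝ) :
    pdM α (fun y => f y - g y) x = pdM α f x - pdM α g x := by
  ext i j
  simp only [pdM, Matrix.sub_apply]
  rw [fderiv_fun_sub (smEntry hf i j x) (smEntry hg i j x)]
  simp

lemma pdM_csmul (c : ℂ) (hf : SmoothMat f) (x : Fin m → ℝ) :
    pdM α (fun y => c • f y) x = c • pdM α f x := by
  ext i j
  simp only [pdM, Matrix.smul_apply, smul_eq_mul]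
  rw [fderiv_const_mul (smEntry hf i j x) c]
  simp

lemma pdM_const (C : Matrix (Fin N) (Fin N) ℂ) (x : Fin m → ℝ) :
    pdM α (fun _ => C) x = 0 := by
  ext i j
  simp [pdM]

lemma pdM_mul (hf : SmoothMat f) (hg : SmoothMat g) (x : Fin m → ℝ) :
    pdM α (fun y => f y * g y) x = pdM α f x * g x + f x * pdM α g x := by
  ext i j
  simp only [pdM, Matrix.add_apply, Matrix.mul_apply]
  rw [fderiv_fun_sum fun k _ => ((smEntry hf i k x).fun_mul (smEntry hg k j x))]
  rw [ContinuousLinearMap.sum_apply]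
  rw [← Finset.sum_add_distrib]
  refine Finset.sum_congr rfl fun k _ => ?_
  rw [fderiv_fun_mul (smEntry hf i k x) (smEntry hg k j x)]
  simp only [ContinuousLinearMap.add_apply, ContinuousLinearMap.smul_apply, smul_eq_mul]
  ring

lemma pdM_lie (hf : SmoothMat f) (hg : SmoothMat g) (x : Fin m → ℝ) :
    pdM α (fun y => ⁅f y, g y⁆) x = ⁅pdM α f x, g x⁆ + ⁅f x, pdM α g x⁆ := by
  simp only [Ring.lie_def]
  rw [show (fun y => f y * g y - g y * f y) = fun y => (fun z => f z * g z) y - (fun z => g z * f z) y from rfl]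
  rw [pdM_sub (smMul hf hg) (smMul hg hf), pdM_mul hf hg x, pdM_mul hg hf x]
  abel

lemma pdM_comm (hf : SmoothMat f) (α β : Fin m) (x : Fin m → ℝ) :
    pdM α (pdM β f) x = pdM β (pdM α f) x := by
  ext i j
  simp only [pdM]
  have hd : Differentiable ℝ (fun y => f y i j) := (hf i j).differentiable (by simp)
  have hd2 : Differentiable ℝ (fderiv ℝ (fun y => f y i j)) :=
    ((hf i j).fderiv_right (m := (⊤ : ℕ∞)) (by simp)).differentiable (by simp)
  have hsymm := second_derivative_symmetric (f' := fderiv ℝ (fun y => f y i j))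
    (fun y => (hd y).hasFDerivAt) (hd2 x).hasFDerivAt
  rw [fderiv_clm_apply (hd2 x) (differentiableAt_const _),
      fderiv_clm_apply (hd2 x) (differentiableAt_const _)]
  simp [hsymm (Pi.single α 1) (Pi.single β 1)]

lemma endgame (c mu : ℂ) (hcoef : c + c + c * c * (1 + mu * mu) = 0)
    (M K E X Y : Matrix (Fin 2) (Fin 2) ℂ) (hK : ⁅X, Y⁆ = K) :
    c • ((M + K) - mu • E) - c • (mu • -E + (M - K))
      + ⁅c • (X - mu • Y), c • (mu • X + Y)⁆ = 0 := by
  have hYX : ⁅Y, X⁆ = -K := by rw [← lie_skew Y X, hK]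
  simp only [lie_add, add_lie, lie_sub, sub_lie, lie_smul, smul_lie, lie_self,
    smul_zero, add_zero, zero_add, sub_zero, zero_sub, smul_smul, hK, hYX,
    smul_add, smul_sub, smul_neg, neg_neg]
  match_scalars <;> first
    | ring1
    | linear_combination hcoef
    | linear_combination -hcoef
    | linear_combination 2*hcoef
    | linear_combination (-2)*hcoef
    | linear_combination 3*hcoef
    | linear_combination (-3)*hcoef

end ZCCaux

set_option maxHeartbeats 1000000 in
open ZCCaux in
/-- Zakharov–Mikhailov zero-curvature representation of the
`ℂP¹` sigma model.  With
`U_x := (−2/(1−λ²))([∂_xθ,θ] − iλ[∂_yθ,θ])` and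
`U_y := (−2/(1−λ²))(iλ[∂_xθ,θ] + [∂_yθ,θ])` for `λ` purely imaginary with
`λ² ≠ 1`, the zero-curvature condition `∂_yU_x − ∂_xU_y + [U_x,U_y] = 0`
holds if `θ` satisfies `[(∂_x² + ∂_y²)θ, θ] = 0` together with the `ℂP¹`
constraint that `P := −iθ + Id/2` is a projector. -/
theorem cp1_zcc
    (θ : (Fin 2 → ℝ) → Matrix (Fin 2) (Fin 2) ℂ)
    (hθ : SmoothMat θ)
    (hanti : ∀ x, (θ x).conjTranspose = -θ x)
    (hproj : ∀ x,
      ((-Complex.I) • θ x + (2 : ℂ)⁻¹ • (1 : Matrix (Fin 2) (Fin 2) ℂ))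
        * ((-Complex.I) • θ x + (2 : ℂ)⁻¹ • (1 : Matrix (Fin 2) (Fin 2) ℂ))
        = (-Complex.I) • θ x + (2 : ℂ)⁻¹ • (1 : Matrix (Fin 2) (Fin 2) ℂ))
    (hEL : ∀ x, ⁅pdM 0 (pdM 0 θ) x + pdM 1 (pdM 1 θ) x, θ x⁆ = 0)
    (l : ℂ) (himag : ∃ t : ℝ, l = Complex.I * t) (hl : l ^ 2 ≠ 1) :
    ∀ x : Fin 2 → ℝ,
      pdM 1 (fun y => (-2 / (1 - l ^ 2)) •
          (⁅pdM 0 θ y, θ y⁆ - (Complex.I * l) • ⁅pdM 1 θ y, θ y⁆)) x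
      - pdM 0 (fun y => (-2 / (1 - l ^ 2)) •
          ((Complex.I * l) • ⁅pdM 0 θ y, θ y⁆ + ⁅pdM 1 θ y, θ y⁆)) x
      + ⁅(-2 / (1 - l ^ 2)) •
            (⁅pdM 0 θ x, θ x⁆ - (Complex.I * l) • ⁅pdM 1 θ x, θ x⁆),
          (-2 / (1 - l ^ 2)) •
            ((Complex.I * l) • ⁅pdM 0 θ x, θ x⁆ + ⁅pdM 1 θ x, θ x⁆)⁆ = 0 := by
  intro x
  letI : LieRing (Matrix (Fin 2) (Fin 2) ℂ) := LieRing.ofAssociativeRing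
  have h2 : (1:ℂ) - l ^ 2 ≠ 0 := sub_ne_zero.mpr fun h => hl h.symm
  -- square identity θ² = -(1/4)·Id
  have hsq : ∀ y, θ y * θ y = (-(4:ℂ)⁻¹) • (1 : Matrix (Fin 2) (Fin 2) ℂ) := by
    intro y
    have h := hproj y
    have hI : (-Complex.I) * (-Complex.I) = -1 := by
      simp [Complex.I_mul_I]
    have e : ∀ A : Matrix (Fin 2) (Fin 2) ℂ,
        ((-Complex.I) • A + (2:ℂ)⁻¹ • 1) * ((-Complex.I) • A + (2:ℂ)⁻¹ • 1)
          = (-1:ℂ) • (A * A) + (-Complex.I) • A + (4:ℂ)⁻¹ • 1 := by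
      intro A
      simp only [add_mul, mul_add, smul_mul_assoc, mul_smul_comm, smul_smul, mul_one,
        one_mul, hI]
      match_scalars <;> simp [Complex.I_sq] <;> ring
    rw [e] at h
    linear_combination (norm := module) (-1:ℂ) • h
  -- anticommutation of θ with its first derivatives
  have hac : ∀ α : Fin 2, θ x * pdM α θ x = -(pdM α θ x * θ x) := by
    intro α
    have h0 : pdM α (fun y => θ y * θ y) x = 0 := by
      rw [show (fun y => θ y * θ y)
          = fun _ : Fin 2 → ℝ => ((-(4:ℂ)⁻¹) • 1 : Matrix (Fin 2) (Fin 2) ℂ) from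
        funext hsq]
      exact pdM_const _ x
    rw [pdM_mul hθ hθ x] at h0
    exact eq_neg_of_add_eq_zero_right h0
  -- key bracket identity
  have hK : ⁅⁅pdM 0 θ x, θ x⁆, ⁅pdM 1 θ x, θ x⁆⁆ = ⁅pdM 0 θ x, pdM 1 θ x⁆ := by
    set t := θ x
    set a := pdM 0 θ x
    set b := pdM 1 θ x
    have ha : t * a = -(a * t) := hac 0
    have hb : t * b = -(b * t) := hac 1
    have hs : t * t = (-(4:ℂ)⁻¹) • 1 := hsq x
    have hat : ⁅a, t⁆ = (2:ℂ) • (a * t) := by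
      rw [Ring.lie_def, ha, sub_neg_eq_add, ← two_smul ℂ]
    have hbt : ⁅b, t⁆ = (2:ℂ) • (b * t) := by
      rw [Ring.lie_def, hb, sub_neg_eq_add, ← two_smul ℂ]
    have e1 : a * t * (b * t) = (4:ℂ)⁻¹ • (a * b) := by
      have h1 : a * t * (b * t) = a * (t * b) * t := by noncomm_ring
      rw [h1, hb]
      have h2' : a * -(b * t) * t = -(a * b * (t * t)) := by noncomm_ring
      rw [h2', hs]
      simp [mul_smul_comm]
    have e2 : b * t * (a * t) = (4:ℂ)⁻¹ • (b * a) := by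
      have h1 : b * t * (a * t) = b * (t * a) * t := by noncomm_ring
      rw [h1, ha]
      have h2' : b * -(a * t) * t = -(b * a * (t * t)) := by noncomm_ring
      rw [h2', hs]
      simp [mul_smul_comm]
    rw [hat, hbt, smul_lie, lie_smul, smul_smul, Ring.lie_def, e1, e2, Ring.lie_def]
    module
  -- Euler-Lagrange rearranged
  have hELx : ⁅pdM 0 (pdM 0 θ) x, θ x⁆ = -⁅pdM 1 (pdM 1 θ) x, θ x⁆ := by
    have h := hEL x
    rw [add_lie] at h
    exact eq_neg_of_add_eq_zero_left h
  -- smoothness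
  have hθ0 := smPd hθ 0
  have hθ1 := smPd hθ 1
  have hF0 : SmoothMat (fun y => ⁅pdM 0 θ y, θ y⁆) := smLie hθ0 hθ
  have hF1 : SmoothMat (fun y => ⁅pdM 1 θ y, θ y⁆) := smLie hθ1 hθ
  -- derivative of U_x in the y-direction
  have hUx : pdM 1 (fun y => (-2 / (1 - l ^ 2)) •
        (⁅pdM 0 θ y, θ y⁆ - (Complex.I * l) • ⁅pdM 1 θ y, θ y⁆)) x
      = (-2 / (1 - l ^ 2)) •
          ((⁅pdM 1 (pdM 0 θ) x, θ x⁆ + ⁅pdM 0 θ x, pdM 1 θ x⁆)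
            - (Complex.I * l) • ⁅pdM 1 (pdM 1 θ) x, θ x⁆) := by
    rw [pdM_csmul _ (smSub hF0 (smCsmul _ hF1)) x]
    rw [pdM_sub hF0 (smCsmul _ hF1) x]
    rw [pdM_csmul _ hF1 x]
    rw [pdM_lie (α := 1) hθ0 hθ x, pdM_lie (α := 1) hθ1 hθ x]
    rw [lie_self, add_zero]
  -- derivative of U_y in the x-direction
  have hUy : pdM 0 (fun y => (-2 / (1 - l ^ 2)) •
        ((Complex.I * l) • ⁅pdM 0 θ y, θ y⁆ + ⁅pdM 1 θ y, θ y⁆)) x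
      = (-2 / (1 - l ^ 2)) •
          ((Complex.I * l) • ⁅pdM 0 (pdM 0 θ) x, θ x⁆
            + (⁅pdM 0 (pdM 1 θ) x, θ x⁆ - ⁅pdM 0 θ x, pdM 1 θ x⁆)) := by
    rw [pdM_csmul _ (smAdd (smCsmul _ hF0) hF1) x]
    rw [pdM_add (smCsmul _ hF0) hF1 x]
    rw [pdM_csmul _ hF0 x]
    rw [pdM_lie (α := 0) hθ0 hθ x, pdM_lie (α := 0) hθ1 hθ x]
    rw [lie_self, add_zero,
      show ⁅pdM 1 θ x, pdM 0 θ x⁆ = -⁅pdM 0 θ x, pdM 1 θ x⁆ by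
        rw [← lie_skew (pdM 1 θ x) (pdM 0 θ x)],
      ← sub_eq_add_neg]
  have hcoef : (-2 / (1 - l ^ 2)) + (-2 / (1 - l ^ 2))
      + (-2 / (1 - l ^ 2)) * (-2 / (1 - l ^ 2))
        * (1 + (Complex.I * l) * (Complex.I * l)) = 0 := by
    rw [show (Complex.I * l) * (Complex.I * l)
        = (Complex.I * Complex.I) * (l * l) by ring, Complex.I_mul_I]
    field_simp
    ring
  rw [hUx, hUy, pdM_comm hθ 0 1 x, hELx]
  exact endgame _ _ hcoef _ _ _ _ _ hK
end
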